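/- Let O be the valuation ring of a finite extension E of ℚ_p with valuation v (v(p) = 1), and let M ∈ M_n(E). Write det(I − XM) = 1 + c_1 X + ... + c_n X^n, and for 1 ≤ s ≤ n let H(s) := min over all s×s minors δ of M of v(δ) (the s-th Hodge number, with H(s) = +∞ if all s×s minors vanish). Then v(c_s) ≥ H(s) for every s; consequently, the Newton polygon of det(I − XM) (the lower convex hull of the points (s, v(c_s)) and (0,0)) lies on or above the convex hull of the points (s, H(s)). -/

import Mathlib

/-!
Up to the sign `(-1)^s`, the coefficient `c_s` of `det(I − XM)` is the sum of the principal
`s×s` minors of `M`. The norm of `E` restricts to that of `ℚ_p` and is therefore ultrametric,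
so the norm of a finite sum is bounded by the norm of one of its terms: some principal minor.
-/

open Polynomial Finset

/-- The reverse characteristic polynomial `det(I − X·M)` of a square matrix. -/
noncomputable def revCharPoly {E : Type*} [CommRing E] {n : ℕ}
    (M : Matrix (Fin n) (Fin n) E) : Polynomial E :=
  ((1 : Matrix (Fin n) (Fin n) (Polynomial E)) -
    (Polynomial.X : Polynomial E) • M.map Polynomial.C).det

theorem revCharPoly_eq_charpolyRev {E : Type*} [CommRing E] {n : ℕ}
    (M : Matrix (Fin n) (Fin n) E) : revCharPoly M = M.charpolyRev :=
  rfl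

theorem IsUltrametricDist.of_norm_algebraMap_le {K L : Type*} [NormedField K]
    [IsUltrametricDist K] [NormedDivisionRing L] [Algebra K L]
    (h : ∀ x : K, ‖algebraMap K L x‖ ≤ ‖x‖) :
    IsUltrametricDist L :=
  letI : NormedAlgebra K L :=
    { norm_smul_le := fun c x => by
        rw [Algebra.smul_def]
        exact (norm_mul_le _ _).trans (by gcongr; exact h c) }
  IsUltrametricDist.of_normedAlgebra K

namespace Matrix

variable {ι R : Type*}

theorem coeff_charpolyRev_eq_sum_minors [Fintype ι] [DecidableEq ι] [CommRing R]
    (M : Matrix ι ι R) (k : ℕ) :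
    M.charpolyRev.coeff k =
      (-1) ^ k *
        ∑ s ∈ univ.powersetCard k, (M.submatrix (Subtype.val : s → ι) Subtype.val).det := by
  have h : M.charpolyRev = det (1 + (X : R[X]) • (-M).map C) := by
    rw [charpolyRev, sub_eq_add_neg, Matrix.map_neg C (map_neg C) M, smul_neg]
  rw [h, coeff_det_one_add_X_smul_eq_sum_minors, mul_sum]
  refine sum_congr rfl fun s hs => ?_
  rw [← (mem_powersetCard.mp hs).2, ← Fintype.card_coe s]
  exact det_neg (M.submatrix Subtype.val Subtype.val)

theorem exists_norm_coeff_charpolyRev_le [Fintype ι] [DecidableEq ι] [NormedCommRing R]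
    [NormOneClass R] [IsUltrametricDist R] (M : Matrix ι ι R) {k : ℕ}
    (hk : k ≤ Fintype.card ι) :
    ∃ s ∈ univ.powersetCard k,
      ‖M.charpolyRev.coeff k‖ ≤ ‖(M.submatrix (Subtype.val : s → ι) Subtype.val).det‖ := by
  have hne : (univ.powersetCard k : Finset (Finset ι)).Nonempty :=
    powersetCard_nonempty.mpr (by simpa using hk)
  obtain ⟨s, hs, hle⟩ := IsUltrametricDist.exists_norm_finsetSum_le_of_nonempty hne
    fun s : Finset ι => (M.submatrix (Subtype.val : s → ι) Subtype.val).det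
  refine ⟨s, hs, le_trans (le_of_eq ?_) hle⟩
  rw [coeff_charpolyRev_eq_sum_minors]
  rcases neg_one_pow_eq_or R k with h | h <;> simp [h]

theorem exists_strictMono_det_submatrix_eq [LinearOrder ι] [CommRing R] {n : ℕ}
    (M : Matrix ι ι R) {s : Finset ι} (hs : s.card = n) :
    ∃ f : Fin n → ι, StrictMono f ∧
      (M.submatrix f f).det = (M.submatrix (Subtype.val : s → ι) Subtype.val).det := by
  let e := s.orderIsoOfFin hs
  exact ⟨fun i => e i, fun i j hij => e.strictMono hij,
    det_submatrix_equiv_self e.toEquiv (M.submatrix (Subtype.val : s → ι) Subtype.val)⟩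

end Matrix

theorem stmt_18_general (p : ℕ) [Fact p.Prime] (E : Type*) [NormedField E]
    [Algebra ℚ_[p] E]
    (hiso : ∀ x : ℚ_[p], ‖algebraMap ℚ_[p] E x‖ = ‖x‖)
    (n : ℕ) (M : Matrix (Fin n) (Fin n) E) :
    ∀ s : ℕ, 1 ≤ s → s ≤ n →
      ∃ f g : Fin s → Fin n, StrictMono f ∧ StrictMono g ∧
        ‖(revCharPoly M).coeff s‖ ≤ ‖(M.submatrix f g).det‖ := by
  intro s _ hsn
  have := IsUltrametricDist.of_norm_algebraMap_le fun x => (hiso x).le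
  rw [revCharPoly_eq_charpolyRev]
  obtain ⟨t, ht, hle⟩ := M.exists_norm_coeff_charpolyRev_le (k := s) (by simpa using hsn)
  obtain ⟨f, hf, hdet⟩ := M.exists_strictMono_det_submatrix_eq (mem_powersetCard.mp ht).2
  exact ⟨f, f, hf, hf, hdet ▸ hle⟩

/-- for `E` a finite extension of `ℚ_p` with the extension of the p-adic norm
(normalized valuation `v`, `v(p)=1`) and `M ∈ M_n(E)`, writing `det(I − XM) = 1 + Σ c_s X^s`,
each `c_s` satisfies `v(c_s) ≥ H(s)`, the minimum of `v` over all `s×s` minors of `M`: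
equivalently, there is an `s×s` minor `δ` (given by strictly monotone row/column selections)
with `‖c_s‖ ≤ ‖δ‖`.  (Consequently the Newton polygon of `det(I − XM)` lies on or above the
convex hull of the points `(s, H(s))`.) -/
theorem stmt_18 (p : ℕ) [Fact p.Prime] (E : Type*) [NormedField E]
    [Algebra ℚ_[p] E] [FiniteDimensional ℚ_[p] E]
    (hiso : ∀ x : ℚ_[p], ‖algebraMap ℚ_[p] E x‖ = ‖x‖)
    (n : ℕ) (M : Matrix (Fin n) (Fin n) E) :
    ∀ s : ℕ, 1 ≤ s → s ≤ n →
      ∃ f g : Fin s → Fin n, StrictMono f ∧ StrictMono g ∧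
        ‖(revCharPoly M).coeff s‖ ≤ ‖(M.submatrix f g).det‖ :=
  stmt_18_general p E hiso n M
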